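/- arXiv:1204.1922 — 2 statements merged into one kernel-verified Lean document; each statement's English description precedes it below -/
import Mathlib

section
/- Let α > 0, M ≥ 0, and let F : ℝ × ℝ^d → ℝ^d be such that, for every t ≥ 0, F(t, ·) is α-dissipative, i.e. ⟨x - y, F(t,x) - F(t,y)⟩ ≤ -α·|x - y|² for all x, y, and |F(t,0)| ≤ M. If x : [0,∞) → ℝ^d is differentiable with x'(t) = F(t, x(t)) for all t ≥ 0, then for every ε ∈ (0, α) and every t ≥ 0: |x(t)|² ≤ (M² / (4ε(α - ε)))·(1 - e^{-2(α-ε)t}) + |x(0)|²·e^{-2(α-ε)t}. -/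
/-!
Writing `f(t) = ‖x(t)‖²`, we have `f' = 2⟪x, F(t, x)⟫`. Splitting
`F(t, x) = (F(t, x) - F(t, 0)) + F(t, 0)`, dissipativity bounds the first part by `-α f` and
Young's inequality bounds the second by `ε f + M² / (4ε)`, so `f' ≤ -2(α - ε) f + M² / (2ε)`.
Grönwall's inequality for this linear differential inequality gives the estimate.
-/

open Real Set

theorem le_gronwallBound_of_deriv_right_le {f f' : ℝ → ℝ} {δ K ε a b : ℝ}
    (hf : ContinuousOn f (Icc a b)) (hf' : ∀ x ∈ Ico a b, HasDerivWithinAt f (f' x) (Ici x) x)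
    (ha : f a ≤ δ) (bound : ∀ x ∈ Ico a b, f' x ≤ K * f x + ε) :
    ∀ x ∈ Icc a b, f x ≤ gronwallBound δ K ε (x - a) :=
  le_gronwallBound_of_liminf_deriv_right_le hf
    (fun x hx _r hr => (hf' x hx).liminf_right_slope_le hr) ha bound

theorem le_of_hasDerivAt_le_neg_mul_add {f f' : ℝ → ℝ} {a c t : ℝ} (ha : a ≠ 0) (ht : 0 ≤ t)
    (hf : ∀ s ∈ Icc 0 t, HasDerivAt f (f' s) s) (bound : ∀ s ∈ Ico 0 t, f' s ≤ -a * f s + c) :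
    f t ≤ c / a * (1 - exp (-a * t)) + f 0 * exp (-a * t) := by
  have hgronwall := le_gronwallBound_of_deriv_right_le
    (fun s hs => (hf s hs).continuousAt.continuousWithinAt)
    (fun s hs => (hf s (Ico_subset_Icc_self hs)).hasDerivWithinAt) le_rfl bound t ⟨ht, le_rfl⟩
  rw [gronwallBound_of_K_ne_0 (neg_ne_zero.mpr ha), sub_zero] at hgronwall
  calc f t ≤ f 0 * exp (-a * t) + c / -a * (exp (-a * t) - 1) := hgronwall
    _ = c / a * (1 - exp (-a * t)) + f 0 * exp (-a * t) := by rw [div_neg]; ring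

section Dissipative

variable {E : Type*} [NormedAddCommGroup E] [InnerProductSpace ℝ E]

def IsDissipative (α : ℝ) (G : E → E) : Prop :=
  ∀ x y, inner ℝ (x - y) (G x - G y) ≤ -α * ‖x - y‖ ^ 2

theorem IsDissipative.two_inner_self_le {α ε : ℝ} {G : E → E} (hG : IsDissipative α G)
    (hε : 0 < ε) (x : E) :
    2 * inner ℝ x (G x) ≤ -(2 * (α - ε)) * ‖x‖ ^ 2 + ‖G 0‖ ^ 2 / (2 * ε) := by
  have hdiss : inner ℝ x (G x - G 0) ≤ -α * ‖x‖ ^ 2 := by simpa using hG x 0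
  have hsplit : inner ℝ x (G x) = inner ℝ x (G x - G 0) + inner ℝ x (G 0) := by
    rw [← inner_add_right, sub_add_cancel]
  have hyoung : ‖x‖ * ‖G 0‖ ≤ ε * ‖x‖ ^ 2 + ‖G 0‖ ^ 2 / (4 * ε) := by
    rw [← sub_nonneg]
    have : ε * ‖x‖ ^ 2 + ‖G 0‖ ^ 2 / (4 * ε) - ‖x‖ * ‖G 0‖
        = (2 * ε * ‖x‖ - ‖G 0‖) ^ 2 / (4 * ε) := by
      field_simp; ring
    rw [this]; positivity
  have hhalf : ‖G 0‖ ^ 2 / (2 * ε) = 2 * (‖G 0‖ ^ 2 / (4 * ε)) := by field_simp; ring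
  linarith [real_inner_le_norm x (G 0)]

end Dissipative

theorem dissipative_flow_norm_sq_bound_general {d : ℕ} (α M : ℝ)
    (F : ℝ → EuclideanSpace ℝ (Fin d) → EuclideanSpace ℝ (Fin d))
    (hF : ∀ t : ℝ, 0 ≤ t → ∀ x y : EuclideanSpace ℝ (Fin d),
      (inner ℝ (x - y) (F t x - F t y) : ℝ) ≤ -α * ‖x - y‖ ^ 2)
    (hF0 : ∀ t : ℝ, 0 ≤ t → ‖F t 0‖ ≤ M)
    (x : ℝ → EuclideanSpace ℝ (Fin d))
    (hx : ∀ t : ℝ, 0 ≤ t → HasDerivAt x (F t (x t)) t) :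
    ∀ ε : ℝ, ε ∈ Set.Ioo 0 α → ∀ t : ℝ, 0 ≤ t →
      ‖x t‖ ^ 2 ≤ M ^ 2 / (4 * ε * (α - ε)) * (1 - Real.exp (-2 * (α - ε) * t))
        + ‖x 0‖ ^ 2 * Real.exp (-2 * (α - ε) * t) := by
  rintro ε ⟨hε, hεα⟩ t ht
  have hbound : ∀ s ∈ Ico 0 t, 2 * inner ℝ (x s) (F s (x s))
      ≤ -(2 * (α - ε)) * ‖x s‖ ^ 2 + M ^ 2 / (2 * ε) := by
    intro s hs
    have hM : ‖F s 0‖ ^ 2 ≤ M ^ 2 := pow_le_pow_left₀ (norm_nonneg _) (hF0 s hs.1) 2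
    have hdiss := IsDissipative.two_inner_self_le (hF s hs.1) hε (x s)
    linarith [div_le_div_of_nonneg_right hM (by positivity : (0 : ℝ) ≤ 2 * ε)]
  have key := le_of_hasDerivAt_le_neg_mul_add (by linarith : 2 * (α - ε) ≠ 0) ht
    (fun s hs => (hx s hs.1).norm_sq) hbound
  rwa [div_div, ← neg_mul, show 2 * ε * (2 * (α - ε)) = 4 * ε * (α - ε) by ring] at key

/-- Moment estimate along a trajectory of a switched `α`-dissipative vector field whose
value at the origin is bounded by `M`. -/
theorem dissipative_flow_norm_sq_bound {d : ℕ} (α M : ℝ) (hα : 0 < α) (hM : 0 ≤ M)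
    (F : ℝ → EuclideanSpace ℝ (Fin d) → EuclideanSpace ℝ (Fin d))
    (hF : ∀ t : ℝ, 0 ≤ t → ∀ x y : EuclideanSpace ℝ (Fin d),
      (inner ℝ (x - y) (F t x - F t y) : ℝ) ≤ -α * ‖x - y‖ ^ 2)
    (hF0 : ∀ t : ℝ, 0 ≤ t → ‖F t 0‖ ≤ M)
    (x : ℝ → EuclideanSpace ℝ (Fin d))
    (hx : ∀ t : ℝ, 0 ≤ t → HasDerivAt x (F t (x t)) t) :
    ∀ ε : ℝ, ε ∈ Set.Ioo 0 α → ∀ t : ℝ, 0 ≤ t →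
      ‖x t‖ ^ 2 ≤ M ^ 2 / (4 * ε * (α - ε)) * (1 - Real.exp (-2 * (α - ε) * t))
        + ‖x 0‖ ^ 2 * Real.exp (-2 * (α - ε) * t) :=
  dissipative_flow_norm_sq_bound_general α M F hF hF0 x hx
end

section
/- Let α > 0 and c > 0, and define F : ℝ → ℝ by F(t) = (1 - exp(-c·(1 - e^{-α t}))) / (1 - exp(-c)) for t > 0 and F(t) = 0 for t ≤ 0. Then for every t ≥ 0: 1 - F(t) = (exp(c·e^{-α t}) - 1) / (exp(c) - 1) ≤ e^{-α t}. Consequently F(t) ≥ 1 - e^{-α t} for all t, i.e. a random variable with cumulative distribution function F is stochastically smaller than an exponential random variable with parameter α. -/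
/-!
With `u = e^{-αt} ∈ (0, 1]`, the survival function `1 - F t` equals `(e^{cu} - 1) / (e^c - 1)`,
and this is at most `u` because, by convexity, `e^{cu}` lies below the chord of `exp` between
`0` and `c`.
-/

open Real

lemma exp_mul_le_one_sub_add_mul_exp (c : ℝ) {u : ℝ} (hu0 : 0 ≤ u) (hu1 : u ≤ 1) :
    exp (c * u) ≤ 1 - u + u * exp c := by
  have h := convexOn_exp.2 (Set.mem_univ 0) (Set.mem_univ c) (sub_nonneg.2 hu1) hu0
    (sub_add_cancel 1 u)
  simp only [smul_eq_mul, mul_zero, zero_add, exp_zero, mul_one] at h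
  rwa [mul_comm c u]

lemma exp_mul_sub_one_div_exp_sub_one_le {c u : ℝ} (hc : 0 < c) (hu0 : 0 ≤ u) (hu1 : u ≤ 1) :
    (exp (c * u) - 1) / (exp c - 1) ≤ u := by
  have hexp : 0 < exp c - 1 := sub_pos.2 (one_lt_exp_iff.2 hc)
  rw [div_le_iff₀ hexp]
  linarith [exp_mul_le_one_sub_add_mul_exp c hu0 hu1]

lemma one_sub_div_one_sub_exp_neg_eq {c : ℝ} (hc : c ≠ 0) (u : ℝ) :
    1 - (1 - exp (-c * (1 - u))) / (1 - exp (-c)) = (exp (c * u) - 1) / (exp c - 1) := by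
  have hexp : exp c - 1 ≠ 0 := sub_ne_zero.2 (mt (exp_eq_one_iff c).1 hc)
  have hsplit : exp (-c * (1 - u)) = exp (c * u) / exp c := by
    rw [← exp_sub]; ring_nf
  rw [hsplit, exp_neg]
  field_simp
  ring

/-- Lemma 3.3 of the paper: the cumulative distribution function `F` of the first jump
time of the companion process dominates the exponential cdf `1 - e^{-αt}`, i.e. the jump
time is stochastically smaller than an exponential variable of parameter `α`. -/
theorem companion_jump_time_stochastically_smaller_than_exponential
    (α c : ℝ) (hα : 0 < α) (hc : 0 < c) (F : ℝ → ℝ)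
    (hFpos : ∀ t : ℝ, 0 < t →
      F t = (1 - Real.exp (-c * (1 - Real.exp (-α * t)))) / (1 - Real.exp (-c)))
    (hFneg : ∀ t : ℝ, t ≤ 0 → F t = 0) :
    (∀ t : ℝ, 0 ≤ t →
        1 - F t = (Real.exp (c * Real.exp (-α * t)) - 1) / (Real.exp c - 1) ∧
        1 - F t ≤ Real.exp (-α * t)) ∧
      ∀ t : ℝ, 1 - Real.exp (-α * t) ≤ F t := by
  -- at `t = 0` the formula for `F` also gives `0`, since `1 - e^{-α·0} = 0`
  have hF : ∀ t, 0 ≤ t → F t = (1 - exp (-c * (1 - exp (-α * t)))) / (1 - exp (-c)) := by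
    intro t ht
    rcases ht.eq_or_lt with rfl | ht
    · simp [hFneg 0 le_rfl]
    · exact hFpos t ht
  have hsurvival : ∀ t, 0 ≤ t →
      1 - F t = (exp (c * exp (-α * t)) - 1) / (exp c - 1) ∧ 1 - F t ≤ exp (-α * t) := by
    intro t ht
    have heq : 1 - F t = (exp (c * exp (-α * t)) - 1) / (exp c - 1) := by
      rw [hF t ht]
      exact one_sub_div_one_sub_exp_neg_eq hc.ne' _
    have hu1 : exp (-α * t) ≤ 1 := exp_le_one_iff.2 (by nlinarith)
    exact ⟨heq, heq ▸ exp_mul_sub_one_div_exp_sub_one_le hc (exp_pos _).le hu1⟩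
  refine ⟨hsurvival, fun t => ?_⟩
  rcases le_or_gt t 0 with ht | ht
  · rw [hFneg t ht, sub_nonpos]
    exact one_le_exp_iff.2 (by nlinarith)
  · linarith [(hsurvival t ht.le).2]
end
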